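/- arXiv:0709.1726 — 5 statements merged into one kernel-verified Lean document; each statement's English description precedes it below -/
import Mathlib

section
/- For all t, s ∈ [0,1], the double series Φ_{0,0}(t)·Φ_{0,0}(s) + Σ_{n=1}^∞ Σ_{k=0}^{2^(n−1)−1} Φ_{n,k}(t)·Φ_{n,k}(s) converges and equals (Γ/(2α))·e^(−α(t+s))·(e^(2α·min(t,s)) − 1), which is the covariance of the Ornstein–Uhlenbeck process started at 0. -/
/-- The Haar-like basis element `Φ_{n,k}` for the Ornstein–Uhlenbeck process with
diffusion coefficient `Γ` and drift coefficient `α`.  For `n = 0` (and `k = 0`) this is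
`Φ_{0,0}(t) = √(Γ/α)·e^(−α/2)·sinh(α t)/√(sinh α)`; for `n ≥ 1` it is the wedge-shaped
function supported on `[2k·2^(−n), 2(k+1)·2^(−n)]`. -/
noncomputable def Phi (Γ α : ℝ) (n k : ℕ) (t : ℝ) : ℝ :=
  if n = 0 then
    Real.sqrt (Γ / α) * Real.exp (-α / 2) * Real.sinh (α * t) / Real.sqrt (Real.sinh α)
  else if 2 * (k : ℝ) * 2 ^ (-(n : ℤ)) ≤ t ∧ t ≤ (2 * (k : ℝ) + 1) * 2 ^ (-(n : ℤ)) then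
    Real.sqrt (Γ / α) * Real.sinh (α * (t - 2 * (k : ℝ) * 2 ^ (-(n : ℤ)))) /
      Real.sqrt (Real.sinh (α * 2 ^ (-(n : ℤ) + 1)))
  else if (2 * (k : ℝ) + 1) * 2 ^ (-(n : ℤ)) ≤ t ∧ t ≤ 2 * ((k : ℝ) + 1) * 2 ^ (-(n : ℤ)) then
    Real.sqrt (Γ / α) * Real.sinh (α * (2 * ((k : ℝ) + 1) * 2 ^ (-(n : ℤ)) - t)) /
      Real.sqrt (Real.sinh (α * 2 ^ (-(n : ℤ) + 1)))
  else 0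

/-!
Write `B_{[a,b]}(t,s) = sinh(α(min t s - a)) sinh(α(b - max t s)) / sinh(α(b - a))` on `[a,b]²`
(and `0` elsewhere): `(Γ/α)·B_{[a,b]}` is the covariance of the Ornstein–Uhlenbeck bridge pinned
at `0` at times `a` and `b`. Conditioning on the value at the midpoint `c` splits it as
`B_{[a,b]} = w(t) w(s) + B_{[a,c]} + B_{[c,b]}`, where `√(Γ/α)·w` is the `Φ_{n,k}` of the cell
`[a,b]`; in the same way the OU covariance on `[0,1]` is `Φ_{0,0}(t)Φ_{0,0}(s) + (Γ/α) B_{[0,1]}`.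
So the partial sum through level `N` is the covariance minus `(Γ/α)` times the sum of `B` over the
dyadic cells of length `2^{-N}`. Only the cell whose interior contains `t` contributes to that
remainder, so it is at most `sinh(α 2^{-N}) → 0`; as the terms are nonnegative this gives `HasSum`.
-/

open Real Filter Topology Finset

noncomputable def bridgeCov (α a b t s : ℝ) : ℝ :=
  if a ≤ min t s ∧ max t s ≤ b then
    sinh (α * (min t s - a)) * sinh (α * (b - max t s)) / sinh (α * (b - a))
  else 0

noncomputable def tent (α a b t : ℝ) : ℝ :=
  if a ≤ t ∧ t ≤ (a + b) / 2 then sinh (α * (t - a)) / √(sinh (α * (b - a)))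
  else if (a + b) / 2 ≤ t ∧ t ≤ b then sinh (α * (b - t)) / √(sinh (α * (b - a)))
  else 0

noncomputable def dyadicBridgeSum (α : ℝ) (m : ℕ) (t s : ℝ) : ℝ :=
  ∑ j ∈ range (2 ^ m), bridgeCov α (j / 2 ^ m) ((j + 1) / 2 ^ m) t s

lemma sinh_mul_sinh_add_sinh_sub_mul_sinh_two_mul (H y : ℝ) :
    sinh y * sinh H + sinh (H - y) * sinh (2 * H) = sinh (2 * H - y) * sinh H := by
  simp only [sinh_eq, two_mul, sub_eq_add_neg, exp_add, exp_neg]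
  field_simp
  ring

lemma exp_neg_mul_sinh_add_sinh_sub (x y : ℝ) :
    exp (-x) * sinh y + sinh (x - y) = sinh x * exp (-y) := by
  simp only [sinh_eq, sub_eq_add_neg, exp_add, exp_neg]
  field_simp
  ring

lemma sum_range_two_mul {M : Type*} [AddCommMonoid M] (f : ℕ → M) (n : ℕ) :
    ∑ i ∈ range (2 * n), f i = ∑ i ∈ range n, (f (2 * i) + f (2 * i + 1)) := by
  induction n with
  | zero => simp
  | succ n ih =>
    rw [mul_add_one, sum_range_succ, sum_range_succ, sum_range_succ, ih, add_assoc]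

section bridgeCov

variable {α a b t s : ℝ}

lemma bridgeCov_comm : bridgeCov α a b t s = bridgeCov α a b s t := by
  simp only [bridgeCov, min_comm, max_comm]

lemma bridgeCov_of_le (hts : t ≤ s) (hat : a ≤ t) (hsb : s ≤ b) :
    bridgeCov α a b t s = sinh (α * (t - a)) * sinh (α * (b - s)) / sinh (α * (b - a)) := by
  rw [bridgeCov, min_eq_left hts, max_eq_right hts, if_pos ⟨hat, hsb⟩]

lemma bridgeCov_eq_zero_of_min_le (h : min t s ≤ a) : bridgeCov α a b t s = 0 := by
  rw [bridgeCov]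
  split_ifs with hmem
  · rw [le_antisymm h hmem.1, sub_self, mul_zero, sinh_zero, zero_mul, zero_div]
  · rfl

lemma bridgeCov_eq_zero_of_le_max (h : b ≤ max t s) : bridgeCov α a b t s = 0 := by
  rw [bridgeCov]
  split_ifs with hmem
  · rw [le_antisymm hmem.2 h, sub_self, mul_zero, sinh_zero, mul_zero, zero_div]
  · rfl

lemma bridgeCov_nonneg (hα : 0 ≤ α) (hab : a ≤ b) : 0 ≤ bridgeCov α a b t s := by
  rw [bridgeCov]
  split_ifs with hmem
  · have hsinh : ∀ {x}, 0 ≤ x → 0 ≤ sinh (α * x) := fun hx => sinh_nonneg_iff.2 (by positivity)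
    exact div_nonneg (mul_nonneg (hsinh (by linarith [hmem.1])) (hsinh (by linarith [hmem.2])))
      (hsinh (by linarith))
  · rfl

lemma bridgeCov_le (hα : 0 ≤ α) (hab : a ≤ b) : bridgeCov α a b t s ≤ sinh (α * (b - a)) := by
  have hS : 0 ≤ sinh (α * (b - a)) := sinh_nonneg_iff.2 (mul_nonneg hα (by linarith))
  rw [bridgeCov]
  split_ifs with hmem
  · have hmin : min t s ≤ max t s := min_le_max
    have hsinh : ∀ {x}, 0 ≤ x → x ≤ b - a → 0 ≤ sinh (α * x) ∧ sinh (α * x) ≤ sinh (α * (b - a)) :=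
      fun hx hxb => ⟨sinh_nonneg_iff.2 (by positivity),
        sinh_le_sinh.2 (mul_le_mul_of_nonneg_left hxb hα)⟩
    obtain ⟨h₁, h₁'⟩ := hsinh (x := min t s - a) (by linarith [hmem.1]) (by linarith [hmem.2])
    obtain ⟨h₂, h₂'⟩ := hsinh (x := b - max t s) (by linarith [hmem.2]) (by linarith [hmem.1])
    exact div_le_of_le_mul₀ hS hS (mul_le_mul h₁' h₂' h₂ hS)
  · exact hS

lemma mem_Ioo_of_bridgeCov_ne_zero (h : bridgeCov α a b t s ≠ 0) : t ∈ Set.Ioo a b :=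
  ⟨lt_of_not_ge fun hta => h (bridgeCov_eq_zero_of_min_le ((min_le_left t s).trans hta)),
    lt_of_not_ge fun hbt => h (bridgeCov_eq_zero_of_le_max (hbt.trans (le_max_left t s)))⟩

end bridgeCov

section tent

variable {α a b t : ℝ}

lemma tent_of_le_midpoint (hat : a ≤ t) (htc : t ≤ (a + b) / 2) :
    tent α a b t = sinh (α * (t - a)) / √(sinh (α * (b - a))) :=
  if_pos ⟨hat, htc⟩

lemma tent_of_midpoint_le (hct : (a + b) / 2 ≤ t) (htb : t ≤ b) :
    tent α a b t = sinh (α * (b - t)) / √(sinh (α * (b - a))) := by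
  by_cases hleft : a ≤ t ∧ t ≤ (a + b) / 2
  · rw [tent, if_pos hleft, show t - a = b - t by linarith [hleft.2]]
  · rw [tent, if_neg hleft, if_pos ⟨hct, htb⟩]

lemma tent_eq_zero (hab : a ≤ b) (ht : t < a ∨ b < t) : tent α a b t = 0 := by
  rw [tent, if_neg (by rintro ⟨_, _⟩; rcases ht with _ | _ <;> linarith),
    if_neg (by rintro ⟨_, _⟩; rcases ht with _ | _ <;> linarith)]

end tent

section cell

variable {α a b : ℝ}

lemma tent_mul_tent_add_bridgeCov_add_bridgeCov (hα : 0 < α) (hab : a < b) (t s : ℝ) :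
    tent α a b t * tent α a b s + bridgeCov α a ((a + b) / 2) t s
      + bridgeCov α ((a + b) / 2) b t s = bridgeCov α a b t s := by
  wlog hts : t ≤ s generalizing t s
  · rw [mul_comm, bridgeCov_comm, bridgeCov_comm (t := t), bridgeCov_comm (t := t)]
    exact this s t (le_of_not_ge hts)
  have hac : a < (a + b) / 2 := by linarith
  have hcb : (a + b) / 2 < b := by linarith
  set c := (a + b) / 2
  have hS : 0 < sinh (α * (b - a)) := sinh_pos_iff.2 (mul_pos hα (by linarith))
  have hsq (x y : ℝ) : x / √(sinh (α * (b - a))) * (y / √(sinh (α * (b - a))))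
      = x * y / sinh (α * (b - a)) := by
    rw [div_mul_div_comm, mul_self_sqrt hS.le]
  have hsplit (u : ℝ) : sinh u / sinh (α * (b - a)) + sinh (α * (c - a) - u) / sinh (α * (c - a))
      = sinh (α * (b - a) - u) / sinh (α * (b - a)) := by
    have hH : 0 < sinh (α * (c - a)) := sinh_pos_iff.2 (mul_pos hα (sub_pos.2 hac))
    rw [show α * (b - a) = 2 * (α * (c - a)) by ring] at hS ⊢
    rw [div_add_div _ _ hS.ne' hH.ne', div_eq_div_iff (mul_pos hS hH).ne' hS.ne']
    linear_combination sinh (2 * (α * (c - a))) *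
      sinh_mul_sinh_add_sinh_sub_mul_sinh_two_mul (α * (c - a)) u
  rcases lt_or_ge t a with hta | hat
  · rw [tent_eq_zero hab.le (.inl hta), zero_mul, zero_add,
      bridgeCov_eq_zero_of_min_le ((min_le_left t s).trans (hta.trans hac).le),
      bridgeCov_eq_zero_of_min_le ((min_le_left t s).trans hta.le),
      bridgeCov_eq_zero_of_min_le ((min_le_left t s).trans hta.le), add_zero]
  rcases lt_or_ge b s with hbs | hsb
  · rw [tent_eq_zero hab.le (.inr hbs), mul_zero, zero_add,
      bridgeCov_eq_zero_of_le_max ((hcb.trans hbs).le.trans (le_max_right t s)),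
      bridgeCov_eq_zero_of_le_max (hbs.le.trans (le_max_right t s)),
      bridgeCov_eq_zero_of_le_max (hbs.le.trans (le_max_right t s)), add_zero]
  rcases le_total s c with hsc | hcs
  · rw [tent_of_le_midpoint hat (hts.trans hsc), tent_of_le_midpoint (hat.trans hts) hsc, hsq,
      bridgeCov_of_le hts hat hsc, bridgeCov_of_le hts hat hsb,
      bridgeCov_eq_zero_of_min_le ((min_le_left t s).trans (hts.trans hsc))]
    have h := hsplit (α * (s - a))
    rw [show α * (c - a) - α * (s - a) = α * (c - s) by ring,
      show α * (b - a) - α * (s - a) = α * (b - s) by ring] at h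
    linear_combination sinh (α * (t - a)) * h
  rcases le_total t c with htc | hct
  · rw [tent_of_le_midpoint hat htc, tent_of_midpoint_le hcs hsb, hsq,
      bridgeCov_eq_zero_of_le_max (hcs.trans (le_max_right t s)),
      bridgeCov_eq_zero_of_min_le ((min_le_left t s).trans htc), bridgeCov_of_le hts hat hsb,
      add_zero, add_zero]
  · rw [tent_of_midpoint_le hct (hts.trans hsb), tent_of_midpoint_le hcs hsb, hsq,
      bridgeCov_eq_zero_of_le_max ((hct.trans hts).trans (le_max_right t s)),
      bridgeCov_of_le hts hct hsb, bridgeCov_of_le hts hat hsb,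
      show b - c = c - a by ring]
    have h := hsplit (α * (b - t))
    rw [show α * (c - a) - α * (b - t) = α * (t - c) by ring,
      show α * (b - a) - α * (b - t) = α * (t - a) by ring] at h
    linear_combination sinh (α * (b - s)) * h

end cell

lemma phi_zero (Γ α : ℝ) (k : ℕ) (t : ℝ) :
    Phi Γ α 0 k t = √(Γ / α) * exp (-α / 2) * sinh (α * t) / √(sinh α) :=
  if_pos rfl

lemma phi_succ_eq_tent (Γ α : ℝ) (m k : ℕ) (t : ℝ) :
    Phi Γ α (m + 1) k t = √(Γ / α) * tent α (k / 2 ^ m) ((k + 1) / 2 ^ m) t := by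
  have hpow : (2 : ℝ) ^ (-((m + 1 : ℕ) : ℤ)) = 1 / 2 / 2 ^ m := by
    rw [zpow_neg, zpow_natCast, pow_succ]; field_simp
  have hleft : 2 * (k : ℝ) * 2 ^ (-((m + 1 : ℕ) : ℤ)) = k / 2 ^ m := by
    rw [hpow]; field_simp
  have hmid : (2 * (k : ℝ) + 1) * 2 ^ (-((m + 1 : ℕ) : ℤ)) = (k / 2 ^ m + (k + 1) / 2 ^ m) / 2 := by
    rw [hpow]; field_simp; ring
  have hright : 2 * ((k : ℝ) + 1) * 2 ^ (-((m + 1 : ℕ) : ℤ)) = (k + 1) / 2 ^ m := by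
    rw [hpow]; field_simp
  have hlen : (2 : ℝ) ^ (-((m + 1 : ℕ) : ℤ) + 1) = (k + 1) / 2 ^ m - k / 2 ^ m := by
    rw [zpow_add_one₀ two_ne_zero, hpow]; field_simp; ring
  simp only [Phi, tent, Nat.add_one_ne_zero, if_false, hleft, hmid, hright, hlen, mul_ite,
    mul_zero, mul_div_assoc]

lemma phi_nonneg (Γ : ℝ) {α t : ℝ} (hα : 0 ≤ α) (ht : 0 ≤ t) (n k : ℕ) : 0 ≤ Phi Γ α n k t := by
  have hsinh : ∀ {x}, 0 ≤ x → 0 ≤ sinh (α * x) := fun hx => sinh_nonneg_iff.2 (by positivity)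
  unfold Phi
  split_ifs with _ hleft hright
  · exact div_nonneg (mul_nonneg (by positivity) (hsinh ht)) (sqrt_nonneg _)
  · exact div_nonneg (mul_nonneg (sqrt_nonneg _) (hsinh (by linarith [hleft.1]))) (sqrt_nonneg _)
  · exact div_nonneg (mul_nonneg (sqrt_nonneg _) (hsinh (by linarith [hright.2]))) (sqrt_nonneg _)
  · rfl

section dyadic

variable {α : ℝ}

lemma dyadicBridgeSum_zero (t s : ℝ) : dyadicBridgeSum α 0 t s = bridgeCov α 0 1 t s := by
  simp [dyadicBridgeSum]

lemma dyadicBridgeSum_succ (m : ℕ) (t s : ℝ) :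
    dyadicBridgeSum α (m + 1) t s = ∑ k ∈ range (2 ^ m),
      (bridgeCov α (k / 2 ^ m) ((k / 2 ^ m + (k + 1) / 2 ^ m) / 2) t s
        + bridgeCov α ((k / 2 ^ m + (k + 1) / 2 ^ m) / 2) ((k + 1) / 2 ^ m) t s) := by
  rw [dyadicBridgeSum, pow_succ', sum_range_two_mul]
  refine sum_congr rfl fun k _ => ?_
  congr 2 <;> push_cast <;> field_simp <;> ring

lemma div_two_pow_lt_succ_div_two_pow (m j : ℕ) : (j : ℝ) / 2 ^ m < (j + 1) / 2 ^ m := by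
  gcongr; linarith

lemma dyadicBridgeSum_nonneg (hα : 0 ≤ α) (m : ℕ) (t s : ℝ) : 0 ≤ dyadicBridgeSum α m t s :=
  sum_nonneg fun j _ => bridgeCov_nonneg hα (div_two_pow_lt_succ_div_two_pow m j).le

lemma dyadicBridgeSum_le (hα : 0 ≤ α) (m : ℕ) (t s : ℝ) :
    dyadicBridgeSum α m t s ≤ sinh (α / 2 ^ m) := by
  have hcell (j : ℕ) : bridgeCov α (j / 2 ^ m) ((j + 1) / 2 ^ m) t s ≤ sinh (α / 2 ^ m) := by
    have h := bridgeCov_le (t := t) (s := s) hα (div_two_pow_lt_succ_div_two_pow m j).le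
    rwa [show α * ((j + 1) / 2 ^ m - j / 2 ^ m) = α / 2 ^ m by ring] at h
  -- only the dyadic cell whose interior contains `t` can contribute
  have hunique (j : ℕ) (hj : bridgeCov α (j / 2 ^ m) ((j + 1) / 2 ^ m) t s ≠ 0) :
      j = ⌊t * 2 ^ m⌋₊ := by
    obtain ⟨hlow, hhigh⟩ := mem_Ioo_of_bridgeCov_ne_zero hj
    rw [div_lt_iff₀ (by positivity)] at hlow
    rw [lt_div_iff₀ (by positivity)] at hhigh
    exact ((Nat.floor_eq_iff ((Nat.cast_nonneg j).trans hlow.le)).2 ⟨hlow.le, hhigh⟩).symm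
  unfold dyadicBridgeSum
  by_cases hmem : ⌊t * 2 ^ m⌋₊ ∈ range (2 ^ m)
  · rw [sum_eq_single_of_mem _ hmem fun j _ hj => by_contra fun h => hj (hunique j h)]
    exact hcell _
  · rw [sum_eq_zero fun j hj => by_contra fun h => hmem (hunique j h ▸ hj)]
    exact sinh_nonneg_iff.2 (by positivity)

lemma tendsto_dyadicBridgeSum (hα : 0 ≤ α) (t s : ℝ) :
    Tendsto (fun m => dyadicBridgeSum α m t s) atTop (𝓝 0) := by
  have h : Tendsto (fun m : ℕ => sinh (α / 2 ^ m)) atTop (𝓝 0) := by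
    have := tendsto_const_nhds (x := α) |>.div_atTop
      (tendsto_pow_atTop_atTop_of_one_lt (one_lt_two (α := ℝ)))
    simpa only [Function.comp_def, sinh_zero] using (continuous_sinh.tendsto 0).comp this
  exact squeeze_zero (fun m => dyadicBridgeSum_nonneg hα m t s)
    (fun m => dyadicBridgeSum_le hα m t s) h

end dyadic

section levels

variable {Γ α : ℝ}

lemma sum_phi_succ_mul_phi_succ (hΓ : 0 ≤ Γ) (hα : 0 < α) (m : ℕ) (t s : ℝ) :
    ∑ k ∈ range (2 ^ m), Phi Γ α (m + 1) k t * Phi Γ α (m + 1) k s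
      = Γ / α * (dyadicBridgeSum α m t s - dyadicBridgeSum α (m + 1) t s) := by
  rw [dyadicBridgeSum_succ, dyadicBridgeSum, ← sum_sub_distrib, mul_sum]
  refine sum_congr rfl fun k _ => ?_
  rw [phi_succ_eq_tent, phi_succ_eq_tent, mul_mul_mul_comm, mul_self_sqrt (div_nonneg hΓ hα.le),
    ← tent_mul_tent_add_bridgeCov_add_bridgeCov hα (div_two_pow_lt_succ_div_two_pow m k) t s]
  ring

lemma phi_zero_mul_add_bridgeCov (hΓ : 0 ≤ Γ) (hα : 0 < α) {t s : ℝ}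
    (ht : t ∈ Set.Icc (0 : ℝ) 1) (hs : s ∈ Set.Icc (0 : ℝ) 1) :
    Phi Γ α 0 0 t * Phi Γ α 0 0 s + Γ / α * bridgeCov α 0 1 t s
      = Γ / (2 * α) * exp (-α * (t + s)) * (exp (2 * α * min t s) - 1) := by
  wlog hts : t ≤ s generalizing t s
  · rw [mul_comm, bridgeCov_comm, min_comm, add_comm t s]
    exact this hs ht (le_of_not_ge hts)
  have hS : 0 < sinh α := sinh_pos_iff.2 hα
  have hprod : Phi Γ α 0 0 t * Phi Γ α 0 0 s
      = Γ / α * (exp (-α) * sinh (α * t) * sinh (α * s)) / sinh α := by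
    have hexp : exp (-α) = exp (-α / 2) * exp (-α / 2) := by rw [← exp_add, add_halves]
    rw [phi_zero, phi_zero, div_mul_div_comm, mul_self_sqrt hS.le, hexp]
    linear_combination (exp (-α / 2) * exp (-α / 2) * sinh (α * t) * sinh (α * s) / sinh α) *
      mul_self_sqrt (div_nonneg hΓ hα.le)
  have hcov : Γ / (2 * α) * exp (-α * (t + s)) * (exp (2 * α * t) - 1)
      = Γ / α * sinh (α * t) * exp (-(α * s)) := by
    rw [sinh_eq, neg_mul, mul_add, neg_add, exp_add, show 2 * α * t = α * t + α * t by ring,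
      exp_add, exp_neg, exp_neg]
    field_simp
  rw [hprod, bridgeCov_of_le hts ht.1 hs.2, min_eq_left hts, hcov, mul_one_sub]
  simp only [sub_zero, mul_one]
  calc Γ / α * (exp (-α) * sinh (α * t) * sinh (α * s)) / sinh α
        + Γ / α * (sinh (α * t) * sinh (α - α * s) / sinh α)
      = Γ / α * sinh (α * t) * ((exp (-α) * sinh (α * s) + sinh (α - α * s)) / sinh α) := by
        ring
    _ = Γ / α * sinh (α * t) * exp (-(α * s)) := by
        rw [exp_neg_mul_sinh_add_sinh_sub, mul_div_cancel_left₀ _ hS.ne']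

end levels

lemma sum_levels_eq_sub_dyadicBridgeSum {Γ α t s : ℝ} (hΓ : 0 ≤ Γ) (hα : 0 < α)
    (ht : t ∈ Set.Icc (0 : ℝ) 1) (hs : s ∈ Set.Icc (0 : ℝ) 1) (N : ℕ) :
    ∑ n ∈ range (N + 1), ∑ k ∈ range (2 ^ (n - 1)), Phi Γ α n k t * Phi Γ α n k s
      = Γ / (2 * α) * exp (-α * (t + s)) * (exp (2 * α * min t s) - 1)
        - Γ / α * dyadicBridgeSum α N t s := by
  rw [sum_range_succ', ← phi_zero_mul_add_bridgeCov hΓ hα ht hs, ← dyadicBridgeSum_zero]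
  simp only [Nat.add_sub_cancel, sum_phi_succ_mul_phi_succ hΓ hα, ← mul_sum, sum_range_sub',
    Nat.zero_sub, pow_zero, sum_range_one]
  ring

/-- For all `t, s ∈ [0,1]`, the double series
`Φ_{0,0}(t)·Φ_{0,0}(s) + Σ_{n=1}^∞ Σ_{k=0}^{2^(n−1)−1} Φ_{n,k}(t)·Φ_{n,k}(s)`
(grouped by levels `n`; note `Finset.range (2 ^ (0 - 1)) = {0}` so the `n = 0` term is
`Φ_{0,0}(t)·Φ_{0,0}(s)`) converges and equals
`(Γ/(2α))·e^(−α(t+s))·(e^(2α·min(t,s)) − 1)`, the covariance of the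
Ornstein–Uhlenbeck process started at `0`. -/
theorem ou_covariance (Γ α : ℝ) (hΓ : 0 < Γ) (hα : 0 < α)
    (t s : ℝ) (ht : t ∈ Set.Icc (0 : ℝ) 1) (hs : s ∈ Set.Icc (0 : ℝ) 1) :
    HasSum (fun n : ℕ => ∑ k ∈ Finset.range (2 ^ (n - 1)), Phi Γ α n k t * Phi Γ α n k s)
      (Γ / (2 * α) * Real.exp (-α * (t + s)) * (Real.exp (2 * α * min t s) - 1)) := by
  have hterm_nonneg (n : ℕ) : 0 ≤ ∑ k ∈ range (2 ^ (n - 1)), Phi Γ α n k t * Phi Γ α n k s :=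
    sum_nonneg fun k _ => mul_nonneg (phi_nonneg Γ hα.le ht.1 n k) (phi_nonneg Γ hα.le hs.1 n k)
  rw [hasSum_iff_tendsto_nat_of_nonneg hterm_nonneg, ← tendsto_add_atTop_iff_nat 1]
  simp only [sum_levels_eq_sub_dyadicBridgeSum hΓ.le hα ht hs]
  simpa using tendsto_const_nhds.sub ((tendsto_dyadicBridgeSum hα.le t s).const_mul (Γ / α))
end

section
/- For every real α > 0, the series Σ_{n=1}^∞ 1/sinh(α·2^n) converges and Σ_{n=1}^∞ 1/sinh(α·2^n) = e^(−α)/sinh(α). -/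
/-!
With `g t = e^{-t} / sinh t = coth t - 1`, the doubling formula gives
`coth t - coth (2t) = 1 / sinh (2t)`, so `1 / sinh (α 2^{n+1}) = g (α 2^n) - g (α 2^{n+1})`.
The series telescopes to `g α - lim g (α 2^n) = g α`, since `g t → 0` as `t → ∞`.
-/

open Filter Topology Real

theorem hasSum_sub_succ_of_tendsto {g : ℕ → ℝ} {a : ℝ} (hg : Tendsto g atTop (𝓝 a))
    (hg_succ : ∀ n, g (n + 1) ≤ g n) :
    HasSum (fun n => g n - g (n + 1)) (g 0 - a) := by
  rw [hasSum_iff_tendsto_nat_of_nonneg fun n => sub_nonneg.2 (hg_succ n)]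
  simpa only [Finset.sum_range_sub'] using tendsto_const_nhds.sub hg

theorem exp_neg_div_sinh_sub_exp_neg_div_sinh_two_mul {t : ℝ} (ht : t ≠ 0) :
    exp (-t) / sinh t - exp (-(2 * t)) / sinh (2 * t) = 1 / sinh (2 * t) := by
  have hs : sinh t ≠ 0 := sinh_ne_zero.2 ht
  have hc : cosh t ≠ 0 := (cosh_pos t).ne'
  rw [← cosh_sub_sinh t, ← cosh_sub_sinh (2 * t), sinh_two_mul, cosh_two_mul]
  field_simp
  linear_combination cosh_sq_sub_sinh_sq t

theorem tendsto_sinh_atTop : Tendsto sinh atTop atTop := by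
  have : Tendsto (fun x => exp x - exp (-x)) atTop atTop := by
    simpa only [sub_eq_add_neg] using
      tendsto_exp_atTop.atTop_add tendsto_exp_neg_atTop_nhds_zero.neg
  simpa only [← sinh_eq] using this.atTop_div_const two_pos

theorem tendsto_exp_neg_div_sinh_atTop : Tendsto (fun t => exp (-t) / sinh t) atTop (𝓝 0) := by
  simpa only [div_eq_mul_inv, Pi.inv_apply, zero_mul] using
    tendsto_exp_neg_atTop_nhds_zero.mul tendsto_sinh_atTop.inv_tendsto_atTop

/-- For every `α > 0`, the series `Σ_{n=1}^∞ 1/sinh(α·2^n)` converges and equals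
`e^(−α)/sinh(α)`.  (The sum over `n : ℕ` of `1/sinh(α·2^(n+1))` is the sum over `n ≥ 1`.) -/
theorem sum_inv_sinh_pow_two (α : ℝ) (hα : 0 < α) :
    HasSum (fun n : ℕ => 1 / Real.sinh (α * 2 ^ (n + 1))) (Real.exp (-α) / Real.sinh α) := by
  set g : ℕ → ℝ := fun n => exp (-(α * 2 ^ n)) / sinh (α * 2 ^ n)
  have hdouble (n : ℕ) : α * 2 ^ (n + 1) = 2 * (α * 2 ^ n) := by ring
  have hterm (n : ℕ) : 1 / sinh (α * 2 ^ (n + 1)) = g n - g (n + 1) := by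
    simp only [g, hdouble,
      exp_neg_div_sinh_sub_exp_neg_div_sinh_two_mul (by positivity : α * 2 ^ n ≠ 0)]
  have hg : Tendsto g atTop (𝓝 0) :=
    tendsto_exp_neg_div_sinh_atTop.comp <|
      (tendsto_pow_atTop_atTop_of_one_lt one_lt_two).const_mul_atTop hα
  have hg_succ (n : ℕ) : g (n + 1) ≤ g n :=
    (sub_pos.1 (hterm n ▸ one_div_pos.2 (sinh_pos_iff.2 (by positivity)))).le
  simpa only [hterm, g, pow_zero, mul_one, sub_zero] using hasSum_sub_succ_of_tendsto hg hg_succ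
end

section
/- Let Γ > 0 and α > 0. For every n ≥ 0, every 0 ≤ k < max(2^(n−1), 1), and every t ∈ [0,1], one has 0 ≤ Φ_{n,k}(t) ≤ Ψ_{n,k}(t); i.e., each Ornstein–Uhlenbeck basis element is dominated pointwise by the corresponding Haar-derived element. -/
/-- The Haar-derived basis element `Ψ_{n,k}` for the Wiener process with diffusion
coefficient `Γ` (`Ψ_{0,0}(t) = √Γ·t` for `n = 0`). -/
noncomputable def Psi (Γ : ℝ) (n k : ℕ) (t : ℝ) : ℝ :=
  if n = 0 then Real.sqrt Γ * t
  else if 2 * (k : ℝ) * 2 ^ (-(n : ℤ)) ≤ t ∧ t ≤ (2 * (k : ℝ) + 1) * 2 ^ (-(n : ℤ)) then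
    Real.sqrt Γ * 2 ^ (((n : ℝ) - 1) / 2) * (t - 2 * (k : ℝ) * 2 ^ (-(n : ℤ)))
  else if (2 * (k : ℝ) + 1) * 2 ^ (-(n : ℤ)) ≤ t ∧ t ≤ 2 * ((k : ℝ) + 1) * 2 ^ (-(n : ℤ)) then
    Real.sqrt Γ * 2 ^ (((n : ℝ) - 1) / 2) * (2 * ((k : ℝ) + 1) * 2 ^ (-(n : ℤ)) - t)
  else 0

/-!
Both sides carry the factor `√Γ`, and after squaring the bound on a branch of `Φ_{n,k}`, of
half-width `P = 2^(-n)`, becomes `2y · sinh² x ≤ x² · sinh 2y` for `0 ≤ x = α s ≤ y = α P`.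
This follows from the convexity of `sinh` on `[0, ∞)`: the secant slope `sinh x / x` increases,
and `sinh y ≤ y cosh y`. For `n = 0` the same chord bound `sinh (α t) ≤ t sinh α` combines with
`e^(-α) sinh α = (1 - e^(-2α)) / 2 ≤ α`.
-/

open Real Set

lemma convexOn_sinh : ConvexOn ℝ (Ici 0) sinh := by
  refine MonotoneOn.convexOn_of_deriv (convex_Ici 0) continuous_sinh.continuousOn
    differentiable_sinh.differentiableOn ?_
  rw [Real.deriv_sinh, interior_Ici]
  exact cosh_strictMonoOn.monotoneOn.mono Ioi_subset_Ici_self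

lemma mul_sinh_le_mul_sinh {x y : ℝ} (hx : 0 ≤ x) (hxy : x ≤ y) : y * sinh x ≤ x * sinh y := by
  rcases hx.eq_or_lt with rfl | hx
  · simp
  have h := convexOn_sinh.secant_mono (a := 0) (mem_Ici.2 le_rfl) hx.le (hx.le.trans hxy) hx.ne'
    (hx.trans_le hxy).ne' hxy
  simp only [sinh_zero, sub_zero] at h
  rwa [div_le_div_iff₀ hx (hx.trans_le hxy), mul_comm, mul_comm (sinh y)] at h

lemma sinh_le_mul_cosh {x : ℝ} (hx : 0 ≤ x) : sinh x ≤ x * cosh x := by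
  rcases hx.eq_or_lt with rfl | hx
  · simp
  have h := convexOn_sinh.slope_le_of_hasDerivAt (mem_Ici.2 le_rfl) hx.le hx (hasDerivAt_sinh x)
  rwa [slope_def_field, sinh_zero, sub_zero, sub_zero, div_le_iff₀ hx, mul_comm] at h

lemma two_mul_mul_sinh_sq_le {x y : ℝ} (hx : 0 ≤ x) (hxy : x ≤ y) :
    2 * y * sinh x ^ 2 ≤ x ^ 2 * sinh (2 * y) := by
  have hy := hx.trans hxy
  have hchord := mul_sinh_le_mul_sinh hx hxy
  have hslope := sinh_le_mul_cosh hy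
  have hsx : 0 ≤ sinh x := by positivity
  have hsy : 0 ≤ sinh y := by positivity
  rw [sinh_two_mul]
  rcases hy.eq_or_lt with rfl | hy
  · simp
  refine le_of_mul_le_mul_left ?_ hy
  calc y * (2 * y * sinh x ^ 2) = 2 * (y * sinh x) ^ 2 := by ring
    _ ≤ 2 * (x * sinh y) ^ 2 := by gcongr
    _ = 2 * x ^ 2 * sinh y * sinh y := by ring
    _ ≤ 2 * x ^ 2 * sinh y * (y * cosh y) := by gcongr
    _ = y * (x ^ 2 * (2 * sinh y * cosh y)) := by ring

lemma exp_neg_mul_sinh_le (x : ℝ) : exp (-x) * sinh x ≤ x := by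
  have h := add_one_le_exp (-(2 * x))
  rw [sinh_eq, mul_div_assoc', mul_sub, ← exp_add, ← exp_add]
  rw [show -(2 * x) = -x + -x by ring] at h
  simp only [neg_add_cancel, exp_zero]
  linarith

lemma div_sqrt_le_div_sqrt {a b c d : ℝ} (hc : 0 ≤ c) (hb : 0 < b) (hd : 0 < d)
    (h : a ^ 2 * d ≤ c ^ 2 * b) : a / √b ≤ c / √d := by
  rw [div_le_div_iff₀ (sqrt_pos.2 hb) (sqrt_pos.2 hd)]
  refine abs_le_of_sq_le_sq' ?_ (by positivity) |>.2
  rwa [mul_pow, mul_pow, sq_sqrt hd.le, sq_sqrt hb.le]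

lemma rpow_sub_one_div_two_eq (n : ℕ) :
    (2 : ℝ) ^ (((n : ℝ) - 1) / 2) = (√((2 : ℝ) ^ (-(n : ℤ) + 1)))⁻¹ := by
  rw [← rpow_intCast, sqrt_eq_rpow, ← rpow_mul zero_le_two, ← rpow_neg zero_le_two]
  congr 1
  push_cast
  ring

lemma phi_branch_nonneg_and_le (Γ : ℝ) {α s h : ℝ} (hα : 0 < α) (hs : 0 ≤ s) (hsh : 2 * s ≤ h) :
    0 ≤ √(Γ / α) * sinh (α * s) / √(sinh (α * h)) ∧
      √(Γ / α) * sinh (α * s) / √(sinh (α * h)) ≤ √Γ * (√h)⁻¹ * s := by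
  rcases hs.eq_or_lt with rfl | hs'
  · simp
  have hh : 0 < h := by linarith
  refine ⟨by positivity, ?_⟩
  have key : sinh (α * s) ^ 2 * h ≤ s ^ 2 * (α * sinh (α * h)) := by
    have hsq := two_mul_mul_sinh_sq_le (x := α * s) (y := α * h / 2) (by positivity) (by nlinarith)
    rw [show 2 * (α * h / 2) = α * h by ring] at hsq
    refine le_of_mul_le_mul_left ?_ hα
    linarith
  calc √(Γ / α) * sinh (α * s) / √(sinh (α * h))
      = √Γ * (sinh (α * s) / √(α * sinh (α * h))) := by
        rw [sqrt_div' _ hα.le, sqrt_mul hα.le]; ring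
    _ ≤ √Γ * (s / √h) :=
        mul_le_mul_of_nonneg_left (div_sqrt_le_div_sqrt hs (by positivity) hh key)
          (sqrt_nonneg Γ)
    _ = √Γ * (√h)⁻¹ * s := by ring

lemma phi_zero_nonneg_and_le (Γ : ℝ) {α t : ℝ} (hα : 0 < α) (ht0 : 0 ≤ t) (ht1 : t ≤ 1) :
    0 ≤ √(Γ / α) * exp (-α / 2) * sinh (α * t) / √(sinh α) ∧
      √(Γ / α) * exp (-α / 2) * sinh (α * t) / √(sinh α) ≤ √Γ * t := by
  refine ⟨by positivity, ?_⟩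
  have hchord : sinh (α * t) ≤ t * sinh α := by
    have h := mul_sinh_le_mul_sinh (by positivity) (mul_le_of_le_one_right hα.le ht1)
    rw [mul_assoc] at h
    exact le_of_mul_le_mul_left h hα
  have key : (exp (-α / 2) * sinh (α * t)) ^ 2 * 1 ≤ t ^ 2 * (α * sinh α) := by
    have hexp : exp (-α / 2) ^ 2 = exp (-α) := by rw [← exp_nat_mul]; ring_nf
    calc (exp (-α / 2) * sinh (α * t)) ^ 2 * 1 = exp (-α) * sinh (α * t) ^ 2 := by
          rw [mul_pow, hexp, mul_one]
      _ ≤ exp (-α) * (t * sinh α) ^ 2 := by gcongr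
      _ = t ^ 2 * sinh α * (exp (-α) * sinh α) := by ring
      _ ≤ t ^ 2 * sinh α * α := by gcongr; exact exp_neg_mul_sinh_le α
      _ = t ^ 2 * (α * sinh α) := by ring
  calc √(Γ / α) * exp (-α / 2) * sinh (α * t) / √(sinh α)
      = √Γ * (exp (-α / 2) * sinh (α * t) / √(α * sinh α)) := by
        rw [sqrt_div' _ hα.le, sqrt_mul hα.le]; ring
    _ ≤ √Γ * (t / √1) :=
        mul_le_mul_of_nonneg_left (div_sqrt_le_div_sqrt ht0 (by positivity) one_pos key)
          (sqrt_nonneg Γ)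
    _ = √Γ * t := by rw [sqrt_one, div_one]

theorem phi_le_psi_general (Γ α : ℝ) (hα : 0 < α) (n k : ℕ)
    (t : ℝ) (ht : t ∈ Set.Icc (0 : ℝ) 1) :
    0 ≤ Phi Γ α n k t ∧ Phi Γ α n k t ≤ Psi Γ n k t := by
  obtain ⟨ht0, ht1⟩ := ht
  rcases eq_or_ne n 0 with rfl | hn
  · simpa only [Phi, Psi, if_true] using phi_zero_nonneg_and_le Γ hα ht0 ht1
  have hlen : (2 : ℝ) ^ (-(n : ℤ) + 1) = 2 * 2 ^ (-(n : ℤ)) := by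
    rw [zpow_add_one₀ two_ne_zero, mul_comm]
  rw [Phi, Psi, if_neg hn, if_neg hn, rpow_sub_one_div_two_eq]
  split_ifs with hup hdown
  · exact phi_branch_nonneg_and_le Γ hα (by linarith [hup.1]) (by linarith [hup.2])
  · exact phi_branch_nonneg_and_le Γ hα (by linarith [hdown.2]) (by linarith [hdown.1])
  · exact ⟨le_rfl, le_rfl⟩

/-- Each Ornstein–Uhlenbeck basis element is dominated pointwise by the corresponding
Haar-derived element: for every `n ≥ 0`, `0 ≤ k < max(2^(n−1), 1)` and `t ∈ [0,1]`,
`0 ≤ Φ_{n,k}(t) ≤ Ψ_{n,k}(t)`. -/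
theorem phi_le_psi (Γ α : ℝ) (hΓ : 0 < Γ) (hα : 0 < α) (n k : ℕ)
    (hk : k < max (2 ^ (n - 1)) 1) (t : ℝ) (ht : t ∈ Set.Icc (0 : ℝ) 1) :
    0 ≤ Phi Γ α n k t ∧ Phi Γ α n k t ≤ Psi Γ n k t :=
  phi_le_psi_general Γ α hα n k t ht
end

section
/- Let (Ω, 𝓕, μ) be a probability space and let ξ : ℕ × ℕ → Ω → ℝ be an independent family of random variables each with standard Gaussian law N(0,1). Then for μ-almost every ω, the series Σ_{n=1}^∞ sup_{t ∈ [0,1]} |Σ_{k=0}^{2^(n−1)−1} Φ_{n,k}(t)·ξ_{n,k}(ω)| converges; consequently the partial sums Φ_{0,0}(t)·ξ_{0,0}(ω) + Σ_{n=1}^N Σ_k Φ_{n,k}(t)·ξ_{n,k}(ω) converge uniformly on [0,1] as N → ∞, and the limit function t ↦ U_t(ω) is continuous. -/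
/-!
At level `n ≥ 1` the functions `Φ_{n,k}` are nonnegative hyperbolic tents with pairwise disjoint
supports, each of height at most `√(Γ/α) · √(sinh (α 2^(1-n))) = O(2^(-n/2))`. Hence the sup over
`[0,1]` of the level-`n` sum is at most that height times `max_k |ξ_{n,k}|`. Gaussian tails give
`P(|ξ_{n,k}| ≥ 2n) ≤ 2 e^(-2n²)`, so by a union bound over the `≤ 2^n` indices and Borel–Cantelli,
almost surely `max_k |ξ_{n,k}| < 2n` for all large `n`. The level sup-norms are then eventually
bounded by `C n 2^(-n/2)`, which is summable, and the Weierstrass M-test gives uniform convergence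
to a continuous limit.
-/

open MeasureTheory ProbabilityTheory

open Real Filter Finset
open scoped NNReal

lemma sinh_le_mul_exp (x : ℝ) : sinh x ≤ x * exp x := by
  have h := add_one_le_exp (-2 * x)
  have hsplit : exp (-x) = exp x * exp (-2 * x) := by rw [← exp_add]; ring_nf
  rw [sinh_eq, hsplit]
  nlinarith [exp_pos x]

lemma sqrt_sinh_mul_two_zpow_le {α : ℝ} (hα : 0 < α) {n : ℕ} (hn : n ≠ 0) :
    √(sinh (α * 2 ^ (-(n : ℤ) + 1))) ≤ √(2 * α * exp α) * (√2)⁻¹ ^ n := by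
  have htwo : (2 : ℝ) ^ (-(n : ℤ) + 1) = 2 * ((√2)⁻¹ ^ n) ^ 2 := by
    rw [zpow_add_one₀ two_ne_zero, zpow_neg, zpow_natCast, ← pow_mul, mul_comm n 2, pow_mul,
      inv_pow, sq_sqrt zero_le_two, inv_pow, mul_comm]
  have hle_one : (2 : ℝ) ^ (-(n : ℤ) + 1) ≤ 1 :=
    zpow_le_one_of_nonpos₀ one_le_two (by omega)
  calc √(sinh (α * 2 ^ (-(n : ℤ) + 1)))
      ≤ √(α * 2 ^ (-(n : ℤ) + 1) * exp α) := by
        gcongr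
        refine (sinh_le_mul_exp _).trans ?_
        gcongr
        nlinarith
    _ = √(2 * α * exp α) * (√2)⁻¹ ^ n := by
        rw [htwo, show α * (2 * ((√2)⁻¹ ^ n) ^ 2) * exp α = 2 * α * exp α * ((√2)⁻¹ ^ n) ^ 2
          by ring, sqrt_mul' _ (by positivity), sqrt_sq (by positivity)]

section Tent

variable {Γ α : ℝ} {n k : ℕ} {t : ℝ}

lemma Phi_eq_tent (hα : 0 < α) (hn : n ≠ 0) :
    Phi Γ α n k t = √(Γ / α) *
      max 0 (min (sinh (α * (t - 2 * k * 2 ^ (-(n : ℤ)))))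
        (sinh (α * (2 * (k + 1) * 2 ^ (-(n : ℤ)) - t)))) /
      √(sinh (α * 2 ^ (-(n : ℤ) + 1))) := by
  have hh : (0 : ℝ) < 2 ^ (-(n : ℤ)) := by positivity
  have hsinh_le {x y : ℝ} (h : x ≤ y) : sinh (α * x) ≤ sinh (α * y) :=
    sinh_le_sinh.2 (mul_le_mul_of_nonneg_left h hα.le)
  have hsinh_nonneg {x : ℝ} (h : 0 ≤ x) : 0 ≤ sinh (α * x) :=
    sinh_nonneg_iff.2 (mul_nonneg hα.le h)
  have hsinh_nonpos {x : ℝ} (h : x ≤ 0) : sinh (α * x) ≤ 0 :=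
    sinh_nonpos_iff.2 (mul_nonpos_of_nonneg_of_nonpos hα.le h)
  unfold Phi
  rw [if_neg hn]
  split_ifs with hleft hright
  · rw [min_eq_left (hsinh_le (by nlinarith)), max_eq_right (hsinh_nonneg (by linarith))]
  · rw [min_eq_right (hsinh_le (by nlinarith)), max_eq_right (hsinh_nonneg (by linarith))]
  · rw [max_eq_left, mul_zero, zero_div]
    rcases lt_or_ge t (2 * k * 2 ^ (-(n : ℤ))) with ht | ht
    · exact (min_le_left _ _).trans (hsinh_nonpos (by linarith))
    · have ht' : 2 * (k + 1) * 2 ^ (-(n : ℤ)) < t := by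
        by_contra! h
        by_cases hmid : t ≤ (2 * k + 1) * 2 ^ (-(n : ℤ))
        · exact hleft ⟨ht, hmid⟩
        · exact hright ⟨(not_le.1 hmid).le, h⟩
      exact (min_le_right _ _).trans (hsinh_nonpos (by linarith))

lemma Phi_nonneg (hα : 0 < α) (hn : n ≠ 0) : 0 ≤ Phi Γ α n k t := by
  rw [Phi_eq_tent hα hn]
  positivity

lemma continuous_Phi (hα : 0 < α) : Continuous (Phi Γ α n k) := by
  rcases eq_or_ne n 0 with rfl | hn
  · unfold Phi
    simp only [↓reduceIte]
    fun_prop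
  · rw [show Phi Γ α n k = _ from funext fun t => Phi_eq_tent hα hn]
    fun_prop

lemma mem_Ioo_of_Phi_ne_zero (hα : 0 < α) (hn : n ≠ 0) (h : Phi Γ α n k t ≠ 0) :
    t ∈ Set.Ioo (2 * (k : ℝ) * 2 ^ (-(n : ℤ))) (2 * (k + 1) * 2 ^ (-(n : ℤ))) := by
  have hpos : 0 < min (sinh (α * (t - 2 * k * 2 ^ (-(n : ℤ)))))
      (sinh (α * (2 * (k + 1) * 2 ^ (-(n : ℤ)) - t))) := by
    by_contra! hle
    rw [Phi_eq_tent hα hn, max_eq_left hle, mul_zero, zero_div] at h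
    exact h rfl
  rw [lt_min_iff, sinh_pos_iff, sinh_pos_iff] at hpos
  exact ⟨by nlinarith [(pos_of_mul_pos_right hpos.1 hα.le)],
    by nlinarith [(pos_of_mul_pos_right hpos.2 hα.le)]⟩

lemma Phi_eq_zero_of_ne (hα : 0 < α) (hn : n ≠ 0) {j : ℕ} (hjk : j ≠ k)
    (hk : Phi Γ α n k t ≠ 0) : Phi Γ α n j t = 0 := by
  by_contra hj
  have hh : (0 : ℝ) < 2 ^ (-(n : ℤ)) := by positivity
  obtain ⟨hk₁, hk₂⟩ := mem_Ioo_of_Phi_ne_zero hα hn hk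
  obtain ⟨hj₁, hj₂⟩ := mem_Ioo_of_Phi_ne_zero hα hn hj
  have hjk₁ : (j : ℝ) < k + 1 := lt_of_mul_lt_mul_right (by nlinarith) hh.le
  have hjk₂ : (k : ℝ) < j + 1 := lt_of_mul_lt_mul_right (by nlinarith) hh.le
  norm_cast at hjk₁ hjk₂
  omega

lemma Phi_le_sqrt_sinh (hα : 0 < α) (hn : n ≠ 0) :
    Phi Γ α n k t ≤ √(Γ / α) * √(sinh (α * 2 ^ (-(n : ℤ) + 1))) := by
  set D := sinh (α * 2 ^ (-(n : ℤ) + 1))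
  have hwidth : (2 : ℝ) ^ (-(n : ℤ) + 1) = 2 * 2 ^ (-(n : ℤ)) := by
    rw [zpow_add_one₀ two_ne_zero, mul_comm]
  have hD : 0 ≤ D := sinh_nonneg_iff.2 (by positivity)
  have htent : min (sinh (α * (t - 2 * k * 2 ^ (-(n : ℤ)))))
      (sinh (α * (2 * (k + 1) * 2 ^ (-(n : ℤ)) - t))) ≤ D := by
    rcases le_or_gt t (2 * (k + 1) * 2 ^ (-(n : ℤ))) with ht | ht
    · refine (min_le_left _ _).trans (sinh_le_sinh.2 (mul_le_mul_of_nonneg_left ?_ hα.le))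
      rw [hwidth]
      nlinarith
    · exact (min_le_right _ _).trans
        ((sinh_nonpos_iff.2 (mul_nonpos_of_nonneg_of_nonpos hα.le (by linarith))).trans hD)
  rw [Phi_eq_tent hα hn, mul_div_assoc]
  gcongr
  calc _ ≤ D / √D := by gcongr; exact max_le hD htent
    _ = √D := div_sqrt

lemma abs_sum_Phi_mul_le (hα : 0 < α) (hn : n ≠ 0) {s : Finset ℕ} {x : ℕ → ℝ} {M : ℝ}
    (hM : 0 ≤ M) (hx : ∀ k ∈ s, |x k| ≤ M) :
    |∑ k ∈ s, Phi Γ α n k t * x k| ≤ √(Γ / α) * √(2 * α * exp α) * (√2)⁻¹ ^ n * M := by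
  have hamp : ∀ k, Phi Γ α n k t ≤ √(Γ / α) * √(2 * α * exp α) * (√2)⁻¹ ^ n := fun k =>
    (Phi_le_sqrt_sinh hα hn).trans
      (by rw [mul_assoc]; gcongr; exact sqrt_sinh_mul_two_zpow_le hα hn)
  by_cases h : ∃ k₀ ∈ s, Phi Γ α n k₀ t ≠ 0
  · obtain ⟨k₀, hk₀, hne⟩ := h
    rw [Finset.sum_eq_single_of_mem k₀ hk₀ fun j _ hj => by
        rw [Phi_eq_zero_of_ne hα hn hj hne, zero_mul],
      abs_mul, abs_of_nonneg (Phi_nonneg hα hn)]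
    exact mul_le_mul (hamp k₀) (hx k₀ hk₀) (abs_nonneg _) (by positivity)
  · push Not at h
    rw [Finset.sum_eq_zero fun k hk => by rw [h k hk, zero_mul], abs_zero]
    positivity

end Tent

section Gaussian

variable {Ω : Type*} [MeasurableSpace Ω] {μ : Measure Ω}

lemma hasSubgaussianMGF_of_map_eq_gaussianReal {X : Ω → ℝ} {v : ℝ≥0}
    (h : μ.map X = gaussianReal 0 v) : HasSubgaussianMGF X v μ := by
  have hX : AEMeasurable X μ := aemeasurable_of_map_neZero (by rw [h]; infer_instance)
  rw [← HasSubgaussianMGF.id_map_iff hX, h]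
  exact ⟨integrable_exp_mul_gaussianReal, fun t => by simp [mgf_id_gaussianReal]⟩

lemma ProbabilityTheory.HasSubgaussianMGF.measure_le_abs_le [IsFiniteMeasure μ] {X : Ω → ℝ}
    {c : ℝ≥0} (h : HasSubgaussianMGF X c μ) {ε : ℝ} (hε : 0 ≤ ε) :
    μ {ω | ε ≤ |X ω|} ≤ ENNReal.ofReal (2 * exp (-ε ^ 2 / (2 * c))) := by
  have hsub : {ω | ε ≤ |X ω|} ⊆ {ω | ε ≤ X ω} ∪ {ω | ε ≤ (-X) ω} := fun _ hω =>
    le_abs.1 hω.out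
  calc μ {ω | ε ≤ |X ω|} ≤ μ {ω | ε ≤ X ω} + μ {ω | ε ≤ (-X) ω} :=
        (measure_mono hsub).trans (measure_union_le _ _)
    _ = ENNReal.ofReal (μ.real {ω | ε ≤ X ω}) + ENNReal.ofReal (μ.real {ω | ε ≤ (-X) ω}) := by
        rw [ofReal_measureReal, ofReal_measureReal]
    _ ≤ ENNReal.ofReal (exp (-ε ^ 2 / (2 * c))) + ENNReal.ofReal (exp (-ε ^ 2 / (2 * c))) := by
        gcongr
        exacts [h.measure_ge_le hε, h.neg.measure_ge_le hε]
    _ = ENNReal.ofReal (2 * exp (-ε ^ 2 / (2 * c))) := by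
        rw [← ENNReal.ofReal_add (by positivity) (by positivity), ← two_mul]

lemma two_mul_exp_neg_two_lt_one : 2 * exp (-2) < 1 := by
  rw [exp_neg, ← div_eq_mul_inv, div_lt_one (exp_pos 2)]
  linarith [add_one_lt_exp (two_ne_zero : (2 : ℝ) ≠ 0)]

theorem ae_eventually_forall_abs_lt_two_mul [IsFiniteMeasure μ] {ξ : ℕ × ℕ → Ω → ℝ}
    (hξ : ∀ p, HasSubgaussianMGF (ξ p) 1 μ) :
    ∀ᵐ ω ∂μ, ∀ᶠ n in atTop, ∀ k < 2 ^ n, |ξ (n, k) ω| < 2 * n := by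
  set S : ℕ → Set Ω := fun n => ⋃ k ∈ range (2 ^ n), {ω | 2 * n ≤ |ξ (n, k) ω|}
  have hS : ∀ n, μ (S n) ≤ ENNReal.ofReal (2 * (2 * exp (-2)) ^ n) := by
    intro n
    have htail : ∀ k, μ {ω | 2 * n ≤ |ξ (n, k) ω|} ≤ ENNReal.ofReal (2 * exp (-2) ^ n) := by
      intro k
      refine ((hξ _).measure_le_abs_le (by positivity)).trans (ENNReal.ofReal_le_ofReal ?_)
      have hn : (n : ℝ) ≤ n ^ 2 := by exact_mod_cast Nat.le_self_pow two_ne_zero n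
      rw [← exp_nat_mul]
      gcongr
      push_cast
      nlinarith
    calc μ (S n) ≤ ∑ k ∈ range (2 ^ n), μ {ω | 2 * n ≤ |ξ (n, k) ω|} :=
          measure_biUnion_finset_le _ _
      _ ≤ ∑ k ∈ range (2 ^ n), ENNReal.ofReal (2 * exp (-2) ^ n) := sum_le_sum fun k _ => htail k
      _ = ENNReal.ofReal (2 * (2 * exp (-2)) ^ n) := by
        rw [← ENNReal.ofReal_sum_of_nonneg fun _ _ => by positivity, sum_const, card_range,
          nsmul_eq_mul]
        push_cast
        ring_nf
  have hsum : Summable fun n : ℕ => 2 * (2 * exp (-2)) ^ n :=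
    (summable_geometric_of_lt_one (by positivity) two_mul_exp_neg_two_lt_one).mul_left 2
  filter_upwards [ae_eventually_notMem
    (ne_top_of_le_ne_top hsum.tsum_ofReal_ne_top (ENNReal.tsum_le_tsum hS))] with ω hω
  filter_upwards [hω] with n hn k hk
  by_contra! hge
  exact hn (Set.mem_iUnion₂.2 ⟨k, mem_range.2 hk, hge⟩)

end Gaussian

section SeriesOfFunctions

variable {X : Type*} {s : Set X} {f : ℕ → X → ℝ} {u : ℕ → ℝ}

lemma summable_iSup_abs_of_eventually_le (hu : Summable u) (hu₀ : ∀ n, 0 ≤ u n)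
    (hfu : ∀ᶠ n in atTop, ∀ x ∈ s, |f n x| ≤ u n) :
    Summable fun n => ⨆ x ∈ s, |f n x| := by
  refine hu.of_norm_bounded_eventually_nat (hfu.mono fun n h => ?_)
  rw [norm_of_nonneg (Real.iSup_nonneg fun x => Real.iSup_nonneg fun _ => abs_nonneg _)]
  exact Real.iSup_le (fun x => Real.iSup_le (h x) (hu₀ n)) (hu₀ n)

lemma exists_tendstoUniformlyOn_sum_range_succ [TopologicalSpace X]
    (hf : ∀ n, ContinuousOn (f n) s) (hu : Summable u)
    (hfu : ∀ᶠ n in atTop, ∀ x ∈ s, |f n x| ≤ u n) :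
    ∃ U : X → ℝ, ContinuousOn U s ∧
      TendstoUniformlyOn (fun N x => ∑ n ∈ range (N + 1), f n x) U atTop s := by
  have hTU := tendstoUniformlyOn_tsum_nat_eventually hu
    (hfu.mono fun n h x hx => (norm_eq_abs _).trans_le (h x hx))
  refine ⟨_, hTU.continuousOn (Frequently.of_forall fun N => ?_),
    fun v hv => (tendsto_add_atTop_nat 1).eventually (hTU v hv)⟩
  exact continuousOn_finsetSum _ fun n _ => hf n

end SeriesOfFunctions

theorem ou_series_ae_uniform_convergence_general
    {Ω : Type*} [MeasurableSpace Ω] (μ : Measure Ω) [IsProbabilityMeasure μ]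
    (Γ α : ℝ) (hα : 0 < α)
    (ξ : ℕ × ℕ → Ω → ℝ)
    (hgauss : ∀ p, μ.map (ξ p) = gaussianReal 0 1) :
    ∀ᵐ ω ∂μ,
      Summable (fun n : ℕ =>
        ⨆ t ∈ Set.Icc (0 : ℝ) 1,
          |∑ k ∈ Finset.range (2 ^ n), Phi Γ α (n + 1) k t * ξ (n + 1, k) ω|) ∧
      ∃ U : ℝ → ℝ, ContinuousOn U (Set.Icc (0 : ℝ) 1) ∧
        TendstoUniformlyOn
          (fun N t => ∑ n ∈ Finset.range (N + 1),
            ∑ k ∈ Finset.range (2 ^ (n - 1)), Phi Γ α n k t * ξ (n, k) ω)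
          U Filter.atTop (Set.Icc (0 : ℝ) 1) := by
  filter_upwards [ae_eventually_forall_abs_lt_two_mul fun p =>
    hasSubgaussianMGF_of_map_eq_gaussianReal (hgauss p)] with ω hω
  set f : ℕ → ℝ → ℝ := fun n t => ∑ k ∈ range (2 ^ (n - 1)), Phi Γ α n k t * ξ (n, k) ω
  set C := √(Γ / α) * √(2 * α * exp α)
  have hf : ∀ n, Continuous (f n) := fun n =>
    continuous_finsetSum _ fun k _ => (continuous_Phi hα).mul continuous_const
  have hfu : ∀ᶠ n in atTop, ∀ t ∈ Set.Icc (0 : ℝ) 1, |f n t| ≤ C * (√2)⁻¹ ^ n * (2 * n) := by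
    filter_upwards [hω, eventually_ne_atTop 0] with n hn hn₀ t _
    exact abs_sum_Phi_mul_le hα hn₀ (by positivity) fun k hk =>
      (hn k ((mem_range.1 hk).trans_le (Nat.pow_le_pow_right two_pos (n.sub_le 1)))).le
  have hu : Summable fun n : ℕ => C * (√2)⁻¹ ^ n * (2 * n) := by
    have hr : ‖(√2)⁻¹‖ < 1 := by
      rw [norm_inv, norm_of_nonneg (sqrt_nonneg 2)]
      exact inv_lt_one_of_one_lt₀ one_lt_sqrt_two
    refine ((summable_pow_mul_geometric_of_norm_lt_one 1 hr).mul_left (2 * C)).congr fun n => ?_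
    ring
  refine ⟨?_, exists_tendstoUniformlyOn_sum_range_succ (fun n => (hf n).continuousOn) hu hfu⟩
  simpa [f] using (summable_nat_add_iff 1).2
    (summable_iSup_abs_of_eventually_le hu (fun n => by positivity) hfu)

/-- Almost-sure normal convergence of the Haar-like expansion of the Ornstein–Uhlenbeck
process: if `ξ_{n,k}` is an independent family of standard Gaussians, then almost surely
the series of level-suprema `Σ_{n=1}^∞ sup_{t∈[0,1]} |Σ_{k<2^(n−1)} Φ_{n,k}(t)·ξ_{n,k}|`
converges, and the partial sums
`Φ_{0,0}(t)·ξ_{0,0} + Σ_{n=1}^N Σ_k Φ_{n,k}(t)·ξ_{n,k}` converge uniformly on `[0,1]`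
to a continuous limit `t ↦ U_t(ω)`.  (The `n = 0` term of the partial sum, via
`Finset.range (2 ^ (0 - 1)) = {0}`, is precisely `Φ_{0,0}(t)·ξ_{0,0}(ω)`.) -/
theorem ou_series_ae_uniform_convergence
    {Ω : Type*} [MeasurableSpace Ω] (μ : Measure Ω) [IsProbabilityMeasure μ]
    (Γ α : ℝ) (hΓ : 0 < Γ) (hα : 0 < α)
    (ξ : ℕ × ℕ → Ω → ℝ) (hmeas : ∀ p, Measurable (ξ p))
    (hindep : iIndepFun ξ μ)
    (hgauss : ∀ p, μ.map (ξ p) = gaussianReal 0 1) :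
    ∀ᵐ ω ∂μ,
      Summable (fun n : ℕ =>
        ⨆ t ∈ Set.Icc (0 : ℝ) 1,
          |∑ k ∈ Finset.range (2 ^ n), Phi Γ α (n + 1) k t * ξ (n + 1, k) ω|) ∧
      ∃ U : ℝ → ℝ, ContinuousOn U (Set.Icc (0 : ℝ) 1) ∧
        TendstoUniformlyOn
          (fun N t => ∑ n ∈ Finset.range (N + 1),
            ∑ k ∈ Finset.range (2 ^ (n - 1)), Phi Γ α n k t * ξ (n, k) ω)
          U Filter.atTop (Set.Icc (0 : ℝ) 1) :=
  ou_series_ae_uniform_convergence_general μ Γ α hα ξ hgauss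
end

section
/- Let Γ > 0 and α > 0. For every t ∈ [0,1], the series Φ_{0,0}(t)² + Σ_{n=1}^∞ Σ_{k=0}^{2^(n−1)−1} Φ_{n,k}(t)² converges and equals (Γ/(2α))·(1 − e^(−2αt)), the variance of the Ornstein–Uhlenbeck process started at 0 at time t. -/
/-!
Write `V(t) = Γ/(2α)·(1 − e^{−2αt})` for the variance of the Ornstein–Uhlenbeck process `X` with
`X₀ = 0`, and `B_m(t)` for the variance of `X_t` conditioned on its values at the dyadic points
`j 2^{−m}`: on the dyadic interval `[a, b] ∋ t` this is the Ornstein–Uhlenbeck bridge variance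
`(Γ/α)·sinh(α(t−a))·sinh(α(b−t))/sinh(α(b−a))`. A hyperbolic identity shows
`Φ_{0,0}(t)² = V(t) − B_0(t)`, and halving `[a, b]` gives
`Σ_k Φ_{m+1,k}(t)² = B_m(t) − B_{m+1}(t)`, since only the `k` whose support contains `t`
contributes. The series telescopes to `V(t) − lim B_m(t) = V(t)`, as
`B_m(t) ≤ (Γ/α)·sinh(α 2^{−m})`.
-/

open Real Filter Finset Topology

lemma sinh_mul_sinh_div_sub_sinh_mul_sinh_div {u : ℝ} (hu : u ≠ 0) (x : ℝ) :
    sinh x * sinh (2 * u - x) / sinh (2 * u) - sinh x * sinh (u - x) / sinh u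
      = sinh x ^ 2 / sinh (2 * u) := by
  have hsu : sinh u ≠ 0 := sinh_ne_zero.mpr hu
  have hs2u : sinh (2 * u) ≠ 0 := sinh_ne_zero.mpr (mul_ne_zero two_ne_zero hu)
  rw [div_sub_div _ _ hs2u hsu, div_eq_div_iff (mul_ne_zero hs2u hsu) hs2u]
  rw [sinh_sub, sinh_sub, sinh_two_mul, cosh_two_mul]
  linear_combination sinh x ^ 2 * sinh u * (2 * sinh u * cosh u) * cosh_sq_sub_sinh_sq u

noncomputable def bridgeVar (Γ α a b t : ℝ) : ℝ :=
  Γ / α * (sinh (α * (t - a)) * sinh (α * (b - t)) / sinh (α * (b - a)))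

section Bridge

variable {Γ α a b : ℝ}

lemma bridgeVar_sub_bridgeVar_left (hα : α ≠ 0) (hab : a ≠ b) (t : ℝ) :
    bridgeVar Γ α a b t - bridgeVar Γ α a ((a + b) / 2) t
      = Γ / α * (sinh (α * (t - a)) ^ 2 / sinh (α * (b - a))) := by
  set u := α * (b - a) / 2
  have hu : u ≠ 0 := by simp [u, hα, sub_ne_zero.mpr hab.symm]
  have key := sinh_mul_sinh_div_sub_sinh_mul_sinh_div hu (α * (t - a))
  rw [show 2 * u = α * (b - a) by ring, show α * (b - a) - α * (t - a) = α * (b - t) by ring,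
    show u - α * (t - a) = α * ((a + b) / 2 - t) by ring] at key
  rw [bridgeVar, bridgeVar, show α * ((a + b) / 2 - a) = u by ring]
  linear_combination Γ / α * key

lemma bridgeVar_sub_bridgeVar_right (hα : α ≠ 0) (hab : a ≠ b) (t : ℝ) :
    bridgeVar Γ α a b t - bridgeVar Γ α ((a + b) / 2) b t
      = Γ / α * (sinh (α * (b - t)) ^ 2 / sinh (α * (b - a))) := by
  set u := α * (b - a) / 2
  have hu : u ≠ 0 := by simp [u, hα, sub_ne_zero.mpr hab.symm]
  have key := sinh_mul_sinh_div_sub_sinh_mul_sinh_div hu (α * (b - t))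
  rw [show 2 * u = α * (b - a) by ring, show α * (b - a) - α * (b - t) = α * (t - a) by ring,
    show u - α * (b - t) = α * (t - (a + b) / 2) by ring] at key
  rw [bridgeVar, bridgeVar, show α * (b - (a + b) / 2) = u by ring]
  linear_combination Γ / α * key

lemma bridgeVar_nonneg (hΓ : 0 ≤ Γ) (hα : 0 ≤ α) {t : ℝ} (hat : a ≤ t) (htb : t ≤ b) :
    0 ≤ bridgeVar Γ α a b t := by
  have hs : ∀ {x y : ℝ}, x ≤ y → 0 ≤ sinh (α * (y - x)) := fun h =>
    sinh_nonneg_iff.mpr (mul_nonneg hα (sub_nonneg.mpr h))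
  have := hs hat; have := hs htb; have := hs (hat.trans htb)
  unfold bridgeVar
  positivity

lemma bridgeVar_le (hΓ : 0 ≤ Γ) (hα : 0 ≤ α) {t : ℝ} (hat : a ≤ t) (htb : t ≤ b) :
    bridgeVar Γ α a b t ≤ Γ / α * sinh (α * (b - a)) := by
  have hs : ∀ {x y : ℝ}, x ≤ y → 0 ≤ sinh (α * (y - x)) := fun h =>
    sinh_nonneg_iff.mpr (mul_nonneg hα (sub_nonneg.mpr h))
  have hmono : ∀ {x y : ℝ}, x ≤ y → sinh (α * x) ≤ sinh (α * y) := fun h =>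
    sinh_le_sinh.mpr (mul_le_mul_of_nonneg_left h hα)
  unfold bridgeVar
  gcongr
  refine div_le_of_le_mul₀ (hs (hat.trans htb)) (hs (hat.trans htb)) ?_
  exact mul_le_mul (hmono (by linarith)) (hmono (by linarith)) (hs htb) (hs (hat.trans htb))

end Bridge

lemma exp_neg_mul_sinh_sq_add_sinh_mul_sinh_sub (x y : ℝ) :
    exp (-y) * sinh x ^ 2 + sinh x * sinh (y - x) = (1 - exp (-(2 * x))) / 2 * sinh y := by
  have hx : exp (-(2 * x)) = exp (-x) * exp (-x) := by rw [← exp_add]; ring_nf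
  rw [sinh_sub, ← cosh_sub_sinh y, hx, ← cosh_sub_sinh x]
  linear_combination sinh y / 2 * cosh_sq_sub_sinh_sq x

lemma Phi_zero_sq {Γ α : ℝ} (hΓ : 0 ≤ Γ) (hα : 0 < α) (t : ℝ) :
    Phi Γ α 0 0 t ^ 2 = Γ / (2 * α) * (1 - exp (-2 * α * t)) - bridgeVar Γ α 0 1 t := by
  have hs : 0 < sinh α := sinh_pos_iff.mpr hα
  have key := exp_neg_mul_sinh_sq_add_sinh_mul_sinh_sub (α * t) α
  rw [show α - α * t = α * (1 - t) by ring, show -(2 * (α * t)) = -2 * α * t by ring] at key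
  have hexp : exp (-α / 2) ^ 2 = exp (-α) := by rw [← exp_nat_mul]; ring_nf
  rw [Phi, if_pos rfl, div_pow, mul_pow, mul_pow, sq_sqrt (by positivity), sq_sqrt hs.le, hexp,
    bridgeVar, sub_zero, sub_zero, mul_one, eq_sub_iff_add_eq]
  linear_combination (norm := skip) Γ / (α * sinh α) * key
  field_simp
  ring

noncomputable def dyadicBridgeVar (Γ α t : ℝ) (m : ℕ) : ℝ :=
  bridgeVar Γ α (⌊t * 2 ^ m⌋₊ / 2 ^ m) ((⌊t * 2 ^ m⌋₊ + 1) / 2 ^ m) t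

section Dyadic

variable {Γ α t : ℝ}

lemma dyadicBridgeVar_eq {m j : ℕ} (h₁ : (j : ℝ) ≤ t * 2 ^ m) (h₂ : t * 2 ^ m < j + 1) :
    dyadicBridgeVar Γ α t m = bridgeVar Γ α (j / 2 ^ m) ((j + 1) / 2 ^ m) t := by
  rw [dyadicBridgeVar, (Nat.floor_eq_iff ((Nat.cast_nonneg j).trans h₁)).mpr ⟨h₁, h₂⟩]

lemma dyadicBridgeVar_zero (ht : t ∈ Set.Icc (0 : ℝ) 1) :
    dyadicBridgeVar Γ α t 0 = bridgeVar Γ α 0 1 t := by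
  rcases ht.2.lt_or_eq with ht1 | rfl
  · simpa using dyadicBridgeVar_eq (Γ := Γ) (α := α) (m := 0) (j := 0) (by simpa using ht.1)
      (by simpa using ht1)
  · simp [dyadicBridgeVar, bridgeVar]

lemma tendsto_dyadicBridgeVar (hΓ : 0 ≤ Γ) (hα : 0 ≤ α) (ht : 0 ≤ t) :
    Tendsto (dyadicBridgeVar Γ α t) atTop (𝓝 0) := by
  have hmesh : Tendsto (fun m : ℕ => Γ / α * sinh (α / 2 ^ m)) atTop (𝓝 0) := by
    have h : Tendsto (fun m : ℕ => α / 2 ^ m) atTop (𝓝 0) :=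
      tendsto_const_nhds.div_atTop (tendsto_pow_atTop_atTop_of_one_lt one_lt_two)
    simpa using ((continuous_sinh.tendsto 0).comp h).const_mul (Γ / α)
  have hpow : ∀ m : ℕ, (0 : ℝ) < 2 ^ m := fun m => by positivity
  have hleft : ∀ m : ℕ, (⌊t * 2 ^ m⌋₊ : ℝ) / 2 ^ m ≤ t := fun m =>
    (div_le_iff₀ (hpow m)).mpr (Nat.floor_le (by positivity))
  have hright : ∀ m : ℕ, t ≤ (⌊t * 2 ^ m⌋₊ + 1) / 2 ^ m := fun m =>
    (le_div_iff₀ (hpow m)).mpr (Nat.lt_floor_add_one _).le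
  refine squeeze_zero (fun m => bridgeVar_nonneg hΓ hα (hleft m) (hright m))
    (fun m => (bridgeVar_le hΓ hα (hleft m) (hright m)).trans_eq ?_) hmesh
  congr 3
  field_simp
  ring

end Dyadic

lemma Phi_succ (Γ α : ℝ) (m k : ℕ) (t : ℝ) :
    Phi Γ α (m + 1) k t = √(Γ / α) *
      sinh (α * max 0 (min (t - k / 2 ^ m) ((k + 1) / 2 ^ m - t))) / √(sinh (α / 2 ^ m)) := by
  have e₁ : (2 : ℝ) ^ (-((m + 1 : ℕ) : ℤ)) = 1 / (2 * 2 ^ m) := by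
    rw [zpow_neg, zpow_natCast, pow_succ', one_div]
  have e₂ : (2 : ℝ) ^ (-((m + 1 : ℕ) : ℤ) + 1) = 1 / 2 ^ m := by
    rw [show -((m + 1 : ℕ) : ℤ) + 1 = -(m : ℤ) by push_cast; ring, zpow_neg, zpow_natCast,
      one_div]
  have ha : 2 * (k : ℝ) * (1 / (2 * 2 ^ m)) = k / 2 ^ m := by field_simp
  have hc : (2 * (k : ℝ) + 1) * (1 / (2 * 2 ^ m)) = (k / 2 ^ m + (k + 1) / 2 ^ m) / 2 := by
    field_simp; ring
  have hb : 2 * ((k : ℝ) + 1) * (1 / (2 * 2 ^ m)) = (k + 1) / 2 ^ m := by field_simp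
  set a : ℝ := k / 2 ^ m
  set b : ℝ := (k + 1) / 2 ^ m
  rw [Phi, if_neg m.succ_ne_zero, e₁, e₂, ha, hc, hb, mul_one_div]
  split_ifs with h₁ h₂
  · rw [min_eq_left (by linarith), max_eq_right (by linarith)]
  · rw [min_eq_right (by linarith), max_eq_right (by linarith)]
  · have hout : min (t - a) (b - t) ≤ 0 := by
      by_contra! h
      rcases le_total t ((a + b) / 2) with h' | h'
      · exact h₁ ⟨by linarith [min_le_left (t - a) (b - t)], h'⟩
      · exact h₂ ⟨h', by linarith [min_le_right (t - a) (b - t)]⟩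
    rw [max_eq_left hout, mul_zero, sinh_zero, mul_zero, zero_div]

section Level

variable {Γ α t : ℝ} {m : ℕ}

lemma Phi_succ_sq (hΓ : 0 ≤ Γ) (hα : 0 ≤ α) (k : ℕ) :
    Phi Γ α (m + 1) k t ^ 2 = Γ / α *
      (sinh (α * max 0 (min (t - k / 2 ^ m) ((k + 1) / 2 ^ m - t))) ^ 2 / sinh (α / 2 ^ m)) := by
  rw [Phi_succ, div_pow, mul_pow, sq_sqrt (by positivity),
    sq_sqrt (sinh_nonneg_iff.mpr (by positivity)), mul_div_assoc]

lemma Phi_succ_eq_zero {k : ℕ} (h : t ≤ k / 2 ^ m ∨ (k + 1) / 2 ^ m ≤ t) :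
    Phi Γ α (m + 1) k t = 0 := by
  have hout : min (t - k / 2 ^ m) ((k + 1) / 2 ^ m - t) ≤ 0 := by
    rcases h with h | h
    · exact (min_le_left _ _).trans (by linarith)
    · exact (min_le_right _ _).trans (by linarith)
  rw [Phi_succ, max_eq_left hout, mul_zero, sinh_zero, mul_zero, zero_div]

lemma Phi_succ_eq_zero_of_ne_floor (ht : 0 ≤ t) {k : ℕ} (hk : k ≠ ⌊t * 2 ^ m⌋₊) :
    Phi Γ α (m + 1) k t = 0 := by
  have hpow : (0 : ℝ) < 2 ^ m := by positivity
  apply Phi_succ_eq_zero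
  rcases hk.lt_or_gt with hk | hk
  · right
    rw [div_le_iff₀ hpow]
    exact le_trans (by exact_mod_cast hk) (Nat.floor_le (by positivity))
  · left
    rw [le_div_iff₀ hpow]
    exact le_of_lt (lt_of_lt_of_le (Nat.lt_floor_add_one _) (by exact_mod_cast hk))

lemma Phi_succ_floor_sq (hΓ : 0 ≤ Γ) (hα : 0 < α) (ht : 0 ≤ t) :
    Phi Γ α (m + 1) ⌊t * 2 ^ m⌋₊ t ^ 2
      = dyadicBridgeVar Γ α t m - dyadicBridgeVar Γ α t (m + 1) := by
  have hpow : (0 : ℝ) < 2 ^ (m + 1) := by positivity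
  set j := ⌊t * 2 ^ m⌋₊
  have hj₁ : (j : ℝ) ≤ t * 2 ^ m := Nat.floor_le (by positivity)
  have hj₂ : t * 2 ^ m < j + 1 := Nat.lt_floor_add_one _
  have hmesh : α * ((j + 1) / 2 ^ m - j / 2 ^ m) = α / 2 ^ m := by field_simp; ring
  have hab : (j : ℝ) / 2 ^ m ≠ (j + 1) / 2 ^ m := by field_simp; simp
  have hleft : ((2 * j : ℕ) : ℝ) / 2 ^ (m + 1) = j / 2 ^ m := by push_cast; field_simp; ring
  have hmid : ((2 * j : ℕ) + 1 : ℝ) / 2 ^ (m + 1) = (j / 2 ^ m + (j + 1) / 2 ^ m) / 2 := by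
    push_cast; field_simp; ring
  have hmid' : ((2 * j + 1 : ℕ) : ℝ) / 2 ^ (m + 1) = (j / 2 ^ m + (j + 1) / 2 ^ m) / 2 := by
    push_cast; field_simp; ring
  have hright : ((2 * j + 1 : ℕ) + 1 : ℝ) / 2 ^ (m + 1) = (j + 1) / 2 ^ m := by
    push_cast; field_simp; ring
  have hleft_le : (j : ℝ) / 2 ^ m ≤ t := by rw [div_le_iff₀ (by positivity)]; exact hj₁
  have hle_right : t ≤ (j + 1) / 2 ^ m := by rw [le_div_iff₀ (by positivity)]; exact hj₂.le
  rw [Phi_succ_sq hΓ hα.le, dyadicBridgeVar_eq hj₁ hj₂]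
  rcases lt_or_ge (t * 2 ^ (m + 1)) (2 * j + 1) with hlt | hge
  · have hlt_mid : t < ((2 * j : ℕ) + 1 : ℝ) / 2 ^ (m + 1) := by
      rw [lt_div_iff₀ hpow]; push_cast; exact hlt
    rw [hmid] at hlt_mid
    rw [dyadicBridgeVar_eq (m := m + 1) (j := 2 * j) (by push_cast; rw [pow_succ]; linarith)
      (by push_cast; exact hlt), hleft, hmid, bridgeVar_sub_bridgeVar_left hα.ne' hab, hmesh,
      min_eq_left (by linarith), max_eq_right (by linarith)]
  · have hmid_le : ((2 * j + 1 : ℕ) : ℝ) / 2 ^ (m + 1) ≤ t := by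
      rw [div_le_iff₀ hpow]; push_cast; exact hge
    rw [hmid'] at hmid_le
    rw [dyadicBridgeVar_eq (m := m + 1) (j := 2 * j + 1) (by push_cast; exact hge)
      (by push_cast; rw [pow_succ]; linarith), hmid', hright,
      bridgeVar_sub_bridgeVar_right hα.ne' hab, hmesh,
      min_eq_right (by linarith), max_eq_right (by linarith)]

end Level

lemma sum_Phi_succ_sq {Γ α t : ℝ} (hΓ : 0 ≤ Γ) (hα : 0 < α) (ht : t ∈ Set.Icc (0 : ℝ) 1)
    (m : ℕ) :
    ∑ k ∈ range (2 ^ m), Phi Γ α (m + 1) k t ^ 2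
      = dyadicBridgeVar Γ α t m - dyadicBridgeVar Γ α t (m + 1) := by
  rw [sum_eq_single ⌊t * 2 ^ m⌋₊, Phi_succ_floor_sq hΓ hα ht.1]
  · intro k _ hk
    rw [Phi_succ_eq_zero_of_ne_floor ht.1 hk, sq, mul_zero]
  · intro hj
    have h : (2 : ℝ) ^ m ≤ ⌊t * 2 ^ m⌋₊ := by exact_mod_cast not_lt.mp (mem_range.not.mp hj)
    rw [Phi_succ_eq_zero (Or.inl ?_), sq, mul_zero]
    rw [le_div_iff₀ (by positivity)]
    exact (mul_le_of_le_one_left (by positivity) ht.2).trans h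

/-- For every `t ∈ [0,1]`, the series `Φ_{0,0}(t)² + Σ_{n=1}^∞ Σ_{k=0}^{2^(n−1)−1} Φ_{n,k}(t)²`
(grouped by levels `n`; note `Finset.range (2 ^ (0 - 1)) = {0}` so the `n = 0` term is
`Φ_{0,0}(t)²`) converges and equals `(Γ/(2α))·(1 − e^(−2αt))`, the variance of the
Ornstein–Uhlenbeck process started at `0` at time `t`. -/
theorem ou_variance (Γ α : ℝ) (hΓ : 0 < Γ) (hα : 0 < α)
    (t : ℝ) (ht : t ∈ Set.Icc (0 : ℝ) 1) :
    HasSum (fun n : ℕ => ∑ k ∈ Finset.range (2 ^ (n - 1)), (Phi Γ α n k t) ^ 2)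
      (Γ / (2 * α) * (1 - Real.exp (-2 * α * t))) := by
  have hpartial : ∀ N : ℕ, ∑ n ∈ range (N + 1), ∑ k ∈ range (2 ^ (n - 1)), Phi Γ α n k t ^ 2
      = Γ / (2 * α) * (1 - exp (-2 * α * t)) - dyadicBridgeVar Γ α t N := by
    intro N
    induction N with
    | zero => simp [Phi_zero_sq hΓ.le hα, dyadicBridgeVar_zero ht]
    | succ N ih =>
      rw [sum_range_succ, ih, Nat.add_sub_cancel, sum_Phi_succ_sq hΓ.le hα ht]
      ring
  rw [hasSum_iff_tendsto_nat_of_nonneg (fun n => sum_nonneg fun k _ => sq_nonneg _)]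
  refine (tendsto_add_atTop_iff_nat 1).mp ?_
  simpa [hpartial] using tendsto_const_nhds.sub (tendsto_dyadicBridgeVar hΓ.le hα.le ht.1)
end
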